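/- Let f : ℝ → ℝ be 1-periodic, integrable on [0,1), with ∫₀¹ f(x)dx = 0, let n be a positive integer and m a natural number, and let 𝒢_m denote the σ-algebra on [0,1) generated by the dyadic intervals [v/2^m, (v+1)/2^m), v = 0, …, 2^m − 1. Then Lebesgue-almost everywhere |𝔼[f(n·) | 𝒢_m](x)| ≤ (2^m/n)·∫₀¹ |f(t)| dt. -/

import Mathlib

/-!
A function that is measurable for the σ-algebra generated by a partition is constant on each
block, so on the dyadic interval `I` containing `x` the conditional expectation of `F = f(n·)` is
its average `2^m ∫_I F`. Substituting `s = n t`, this average is `2^m / n` times an integral of `f`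
over an interval; removing the whole periods, which contribute nothing since `f` has mean zero,
leaves an interval shorter than one period, over which `|∫ f| ≤ ∫₀¹ |f|`.
-/

open MeasureTheory Set

/-- The σ-algebra on ℝ generated by the dyadic intervals [v/2^m, (v+1)/2^m), v = 0,…,2^m − 1. -/
def dyadicSigma (m : ℕ) : MeasurableSpace ℝ :=
  MeasurableSpace.generateFrom
    {s : Set ℝ | ∃ v : ℕ, v < 2 ^ m ∧ s = Set.Ico ((v : ℝ) / 2 ^ m) (((v : ℝ) + 1) / 2 ^ m)}

open Function

namespace MeasurableSpace

variable {α : Type*} {S : Set (Set α)} {s : Set α}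

theorem subset_or_disjoint_of_measurableSet_generateFrom (hS : S.PairwiseDisjoint id)
    (hs : s ∈ S) {t : Set α} (ht : MeasurableSet[generateFrom S] t) : s ⊆ t ∨ Disjoint s t := by
  induction t, ht using generateFrom_induction with
  | hC t htS =>
    rcases eq_or_ne s t with rfl | hst
    · exact .inl subset_rfl
    · exact .inr (hS hs htS hst)
  | empty => exact .inr (disjoint_empty s)
  | compl t _ ih =>
    exact ih.symm.imp subset_compl_iff_disjoint_right.2 disjoint_compl_right_iff_subset.2
  | iUnion t _ ih =>
    by_cases h : ∀ i, Disjoint s (t i)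
    · exact .inr (disjoint_iUnion_right.2 h)
    · obtain ⟨i, hi⟩ := not_forall.1 h
      exact .inl (((ih i).resolve_right hi).trans (subset_iUnion t i))

theorem _root_.Measurable.eq_of_mem_generateFrom {β : Type*} [MeasurableSpace β]
    [MeasurableSingletonClass β] {g : α → β} (hg : Measurable[generateFrom S] g)
    (hS : S.PairwiseDisjoint id) (hs : s ∈ S) {x y : α} (hx : x ∈ s) (hy : y ∈ s) :
    g x = g y := by
  rcases subset_or_disjoint_of_measurableSet_generateFrom hS hs
    (hg (measurableSet_singleton (g y))) with hsub | hdisj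
  · exact hsub hx
  · exact absurd rfl (disjoint_left.1 hdisj hy)

end MeasurableSpace

theorem MeasureTheory.measureReal_smul_condExp_generateFrom {α E : Type*}
    {m0 : MeasurableSpace α} {μ : Measure α} [NormedAddCommGroup E] [NormedSpace ℝ E]
    [CompleteSpace E] {S : Set (Set α)} {s : Set α} (hS : S.PairwiseDisjoint id)
    (hm : MeasurableSpace.generateFrom S ≤ m0) [SigmaFinite (μ.trim hm)] {F : α → E}
    (hF : Integrable F μ) (hs : s ∈ S) {x : α} (hx : x ∈ s) :
    μ.real s • μ[F | MeasurableSpace.generateFrom S] x = ∫ y in s, F y ∂μ := by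
  borelize E
  have hs_meas := MeasurableSpace.measurableSet_generateFrom hs
  have hconst : EqOn (μ[F | MeasurableSpace.generateFrom S])
      (fun _ => μ[F | MeasurableSpace.generateFrom S] x) s := fun y hy =>
    stronglyMeasurable_condExp.measurable.eq_of_mem_generateFrom hS hs hy hx
  rw [← setIntegral_condExp hm hF hs_meas, setIntegral_congr_fun (hm _ hs_meas) hconst,
    setIntegral_const]

namespace Function.Periodic

variable {E : Type*} [NormedAddCommGroup E] {f : ℝ → E} {T : ℝ}

theorem intervalIntegrable_comp_mul (hf : Periodic f T) (hT : T ≠ 0)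
    (hint : IntervalIntegrable f volume 0 T) {c : ℝ} (hc : c ≠ 0) (a b : ℝ) :
    IntervalIntegrable (fun x => f (c * x)) volume a b := by
  simpa [hc] using (hf.intervalIntegrable₀ hT hint (c * a) (c * b)).comp_mul_left (c := c)

variable [NormedSpace ℝ E]

theorem norm_intervalIntegral_le_of_integral_eq_zero (hf : Periodic f T) (hT : 0 < T)
    (hint : IntervalIntegrable f volume 0 T) (hmean : ∫ x in 0..T, f x = 0) (a b : ℝ) :
    ‖∫ x in a..b, f x‖ ≤ ∫ x in 0..T, ‖f x‖ := by
  have hii := hf.intervalIntegrable₀ hT.ne' hint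
  have hnorm : Periodic (fun x => ‖f x‖) T := fun x => by simp only [hf x]
  wlog hab : a ≤ b generalizing a b
  · rw [intervalIntegral.integral_symm, norm_neg]
    exact this b a (le_of_not_ge hab)
  -- `[a, c]` consists of whole periods and `[c, b]` is shorter than one period
  set c := a + ⌊(b - a) / T⌋ • T
  have hcb : c ≤ b := by
    have := Int.floor_le ((b - a) / T)
    rw [le_div_iff₀ hT] at this
    simp only [c, zsmul_eq_mul]; linarith
  have hbc : b ≤ c + T := by
    have := Int.lt_floor_add_one ((b - a) / T)
    rw [div_lt_iff₀ hT] at this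
    simp only [c, zsmul_eq_mul]; linarith
  have hperiods : ∫ x in a..c, f x = 0 := by
    rw [hf.intervalIntegral_add_zsmul_eq _ _ hii, hf.intervalIntegral_add_eq a 0, zero_add,
      hmean, smul_zero]
  calc ‖∫ x in a..b, f x‖ = ‖∫ x in c..b, f x‖ := by
        rw [← intervalIntegral.integral_add_adjacent_intervals (hii a c) (hii c b), hperiods,
          zero_add]
    _ ≤ ∫ x in c..b, ‖f x‖ := intervalIntegral.norm_integral_le_integral_norm hcb
    _ ≤ ∫ x in c..c + T, ‖f x‖ :=
        intervalIntegral.integral_mono_interval le_rfl hcb hbc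
          (.of_forall fun _ => norm_nonneg _) (hii c (c + T)).norm
    _ = ∫ x in 0..T, ‖f x‖ := by simpa using hnorm.intervalIntegral_add_eq c 0

theorem norm_intervalIntegral_comp_mul_le (hf : Periodic f T) (hT : 0 < T)
    (hint : IntervalIntegrable f volume 0 T) (hmean : ∫ x in 0..T, f x = 0) {c : ℝ} (hc : c ≠ 0)
    (a b : ℝ) : ‖∫ x in a..b, f (c * x)‖ ≤ |c|⁻¹ * ∫ x in 0..T, ‖f x‖ := by
  rw [intervalIntegral.integral_comp_mul_left (f := f) hc, norm_smul, norm_inv, Real.norm_eq_abs]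
  gcongr
  exact hf.norm_intervalIntegral_le_of_integral_eq_zero hT hint hmean _ _

end Function.Periodic

theorem natFloor_mul_eq_of_mem_Ico_div {c x : ℝ} (hc : 0 < c) {v : ℕ}
    (hx : x ∈ Ico ((v : ℝ) / c) ((v + 1) / c)) : ⌊c * x⌋₊ = v := by
  rw [mem_Ico, div_le_iff₀' hc, lt_div_iff₀' hc] at hx
  exact (Nat.floor_eq_iff ((Nat.cast_nonneg v).trans hx.1)).2 hx

theorem pairwise_disjoint_Ico_natCast_div {c : ℝ} (hc : 0 < c) :
    Pairwise (Disjoint on fun v : ℕ => Ico ((v : ℝ) / c) ((v + 1) / c)) := fun _ _ hvw =>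
  disjoint_left.2 fun _ hv hw =>
    hvw ((natFloor_mul_eq_of_mem_Ico_div hc hv).symm.trans (natFloor_mul_eq_of_mem_Ico_div hc hw))

theorem exists_lt_mem_Ico_natCast_div {N : ℕ} (hN : 0 < N) {x : ℝ} (hx : x ∈ Ico (0 : ℝ) 1) :
    ∃ v < N, x ∈ Ico ((v : ℝ) / N) ((v + 1) / N) := by
  have hN' : (0 : ℝ) < N := Nat.cast_pos.2 hN
  have hNx : 0 ≤ N * x := mul_nonneg hN'.le hx.1
  refine ⟨⌊N * x⌋₊, (Nat.floor_lt hNx).2 (mul_lt_of_lt_one_right hN' hx.2), ?_⟩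
  rw [mem_Ico, div_le_iff₀' hN', lt_div_iff₀' hN']
  exact ⟨Nat.floor_le hNx, Nat.lt_floor_add_one _⟩

theorem condExp_dyadicSigma_eq_of_mem {E : Type*} [NormedAddCommGroup E] [NormedSpace ℝ E]
    [CompleteSpace E] {F : ℝ → E} (hF : IntegrableOn F (Ico 0 1)) {m v : ℕ} (hv : v < 2 ^ m)
    {x : ℝ} (hx : x ∈ Ico ((v : ℝ) / 2 ^ m) ((v + 1) / 2 ^ m)) :
    (volume.restrict (Ico (0 : ℝ) 1))[F | dyadicSigma m] x
      = (2 : ℝ) ^ m • ∫ t in (v : ℝ) / 2 ^ m..(v + 1) / 2 ^ m, F t := by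
  have h2m : (0 : ℝ) < 2 ^ m := by positivity
  have hvv : (v : ℝ) / 2 ^ m ≤ (v + 1) / 2 ^ m := by gcongr; linarith
  have hsub : Ico ((v : ℝ) / 2 ^ m) ((v + 1) / 2 ^ m) ⊆ Ico 0 1 :=
    Ico_subset_Ico (by positivity) (by rw [div_le_one h2m]; exact_mod_cast hv)
  let S := {s | ∃ v : ℕ, v < 2 ^ m ∧ s = Ico ((v : ℝ) / 2 ^ m) ((v + 1) / 2 ^ m)}
  have hS : S.PairwiseDisjoint id := by
    rintro _ ⟨v, -, rfl⟩ _ ⟨w, -, rfl⟩ hvw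
    exact pairwise_disjoint_Ico_natCast_div h2m fun h => hvw (h ▸ rfl)
  have hle : MeasurableSpace.generateFrom S ≤ _ :=
    MeasurableSpace.generateFrom_le (by rintro _ ⟨v, -, rfl⟩; exact measurableSet_Ico)
  have : IsFiniteMeasure (volume.restrict (Ico (0 : ℝ) 1)) :=
    isFiniteMeasure_restrict.2 measure_Ico_lt_top.ne
  have haverage := measureReal_smul_condExp_generateFrom hS hle hF ⟨v, hv, rfl⟩ hx
  rw [measureReal_restrict_apply measurableSet_Ico, Measure.restrict_restrict measurableSet_Ico,
    inter_eq_self_of_subset_left hsub, Real.volume_real_Ico_of_le hvv,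
    show ((v : ℝ) + 1) / 2 ^ m - v / 2 ^ m = (2 ^ m)⁻¹ by ring] at haverage
  rw [intervalIntegral.integral_of_le hvv, ← integral_Ico_eq_integral_Ioc, ← haverage, smul_smul,
    mul_inv_cancel₀ h2m.ne', one_smul]
  rfl

theorem condexp_dyadic_bound
    (f : ℝ → ℝ) (hper : ∀ x : ℝ, f (x + 1) = f x)
    (hint : IntegrableOn f (Set.Ico (0:ℝ) 1))
    (hmean : ∫ x in Set.Ico (0:ℝ) 1, f x = 0)
    (n : ℕ) (hn : 0 < n) (m : ℕ) :
    ∀ᵐ x ∂(volume.restrict (Set.Ico (0:ℝ) 1)),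
      abs (((volume.restrict (Set.Ico (0:ℝ) 1))[(fun t => f ((n : ℝ) * t)) | dyadicSigma m]) x)
        ≤ ((2 : ℝ) ^ m / (n : ℝ)) * ∫ t in Set.Ico (0:ℝ) 1, |f t| := by
  have hper : Periodic f 1 := hper
  have hn' : (n : ℝ) ≠ 0 := Nat.cast_ne_zero.2 hn.ne'
  have hIco (g : ℝ → ℝ) : ∫ t in Ico (0 : ℝ) 1, g t = ∫ t in 0..1, g t := by
    rw [intervalIntegral.integral_of_le zero_le_one, integral_Ico_eq_integral_Ioc]
  have hint' : IntervalIntegrable f volume 0 1 :=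
    (intervalIntegrable_iff_integrableOn_Ico_of_le zero_le_one).2 hint
  have hF : IntegrableOn (fun t => f (n * t)) (Ico 0 1) :=
    (intervalIntegrable_iff_integrableOn_Ico_of_le zero_le_one).1
      (hper.intervalIntegrable_comp_mul one_ne_zero hint' hn' 0 1)
  filter_upwards [ae_restrict_mem measurableSet_Ico] with x hx
  obtain ⟨v, hv, hxv⟩ := exists_lt_mem_Ico_natCast_div (N := 2 ^ m) (by positivity) hx
  push_cast at hxv
  calc _ = 2 ^ m * ‖∫ t in (v : ℝ) / 2 ^ m..(v + 1) / 2 ^ m, f (n * t)‖ := by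
        rw [condExp_dyadicSigma_eq_of_mem hF hv hxv, smul_eq_mul, abs_mul,
          abs_of_pos (by positivity), Real.norm_eq_abs]
    _ ≤ 2 ^ m * (|(n : ℝ)|⁻¹ * ∫ t in 0..1, ‖f t‖) := by
        gcongr
        exact hper.norm_intervalIntegral_comp_mul_le one_pos hint' (by rwa [← hIco]) hn' _ _
    _ = _ := by simp only [hIco, Nat.abs_cast, Real.norm_eq_abs]; ring
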